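/- arXiv:1908.00414 — 3 statements merged into one kernel-verified Lean document; each statement's English description precedes it below -/
import Mathlib

section
/- With the leave-one-out construction γ̂(z_i) − γ̄(z_i) = (1/(n−1)) ∑_{j≠i} φ(z_i, z_j), and g'' a bilinear functional in its last two arguments, the quadratic form (1/n) ∑_{i=1}^n g''(z_i, γ̂(z_i) − γ̄(z_i), γ̂(z_i) − γ̄(z_i)) equals (1/(n−1)) U_{n,1} + ((n−2)/(n−1)) U_{n,2}, where U_{n,1} = (1/(n(n−1))) ∑_{i≠j} g''(z_i, φ(z_i,z_j), φ(z_i,z_j)) and U_{n,2} = (1/(n(n−1)(n−2))) ∑_{i≠j≠l} g''(z_i, φ(z_i,z_j), φ(z_i,z_l)). -/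
open Finset

/-- The quadratic form of the leave-one-out estimation error decomposes into two
U-statistics: `(1/(n-1)) U_{n,1} + ((n-2)/(n-1)) U_{n,2}`. -/
theorem quadratic_form_Ustat_decomposition
    {Z V : Type*} [AddCommGroup V] [Module ℝ V]
    (n : ℕ) (hn : 3 ≤ n) (z : Fin n → Z) (φ : Z → Z → V)
    (g'' : Z → V → V → ℝ)
    (hbilin₁ : ∀ w v, IsLinearMap ℝ (fun u => g'' w u v))
    (hbilin₂ : ∀ w u, IsLinearMap ℝ (g'' w u))
    (hsymm : ∀ w u v, g'' w u v = g'' w v u)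
    (diff : Fin n → V)
    (hdiff : ∀ i, diff i = (1 / ((n : ℝ) - 1)) • ∑ j ∈ univ.erase i, φ (z i) (z j))
    (U₁ U₂ : ℝ)
    (hU₁ : U₁ = (1 / ((n : ℝ) * ((n : ℝ) - 1))) *
      ∑ i : Fin n, ∑ j ∈ univ.erase i, g'' (z i) (φ (z i) (z j)) (φ (z i) (z j)))
    (hU₂ : U₂ = (1 / ((n : ℝ) * ((n : ℝ) - 1) * ((n : ℝ) - 2))) *
      ∑ i : Fin n, ∑ j ∈ univ.erase i, ∑ l ∈ (univ.erase i).erase j,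
        g'' (z i) (φ (z i) (z j)) (φ (z i) (z l))) :
    (1 / (n : ℝ)) * ∑ i : Fin n, g'' (z i) (diff i) (diff i) =
      (1 / ((n : ℝ) - 1)) * U₁ + (((n : ℝ) - 2) / ((n : ℝ) - 1)) * U₂ := by
  have hn3 : (3 : ℝ) ≤ (n : ℝ) := by exact_mod_cast hn
  have hn0 : (n : ℝ) ≠ 0 := by linarith
  have hn1 : (n : ℝ) - 1 ≠ 0 := by linarith
  have hn2 : (n : ℝ) - 2 ≠ 0 := by linarith
  have hsum1 : ∀ w (s : Finset (Fin n)) (f : Fin n → V) (v : V),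
      g'' w (∑ j ∈ s, f j) v = ∑ j ∈ s, g'' w (f j) v := by
    intro w s f v
    exact map_sum (IsLinearMap.mk' _ (hbilin₁ w v)) f s
  have hsum2 : ∀ w (s : Finset (Fin n)) (f : Fin n → V) (u : V),
      g'' w u (∑ j ∈ s, f j) = ∑ j ∈ s, g'' w u (f j) := by
    intro w s f u
    exact map_sum (IsLinearMap.mk' _ (hbilin₂ w u)) f s
  set c : ℝ := 1 / ((n : ℝ) - 1) with hc
  have key : ∀ i : Fin n, g'' (z i) (diff i) (diff i) =
      c ^ 2 * ((∑ j ∈ univ.erase i, g'' (z i) (φ (z i) (z j)) (φ (z i) (z j))) +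
        ∑ j ∈ univ.erase i, ∑ l ∈ (univ.erase i).erase j,
          g'' (z i) (φ (z i) (z j)) (φ (z i) (z l))) := by
    intro i
    rw [hdiff i]
    rw [(hbilin₁ (z i) _).map_smul, (hbilin₂ (z i) _).map_smul]
    rw [hsum1 (z i) _ _ _]
    rw [Finset.sum_congr rfl (fun j _ => hsum2 (z i) _ _ (φ (z i) (z j)))]
    have split : ∀ j ∈ univ.erase i,
        (∑ l ∈ univ.erase i, g'' (z i) (φ (z i) (z j)) (φ (z i) (z l))) =
        g'' (z i) (φ (z i) (z j)) (φ (z i) (z j)) +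
          ∑ l ∈ (univ.erase i).erase j, g'' (z i) (φ (z i) (z j)) (φ (z i) (z l)) := by
      intro j hj
      exact (Finset.add_sum_erase _ _ hj).symm
    rw [Finset.sum_congr rfl split, Finset.sum_add_distrib]
    simp only [smul_eq_mul]
    ring
  set A := ∑ i : Fin n, ∑ j ∈ univ.erase i, g'' (z i) (φ (z i) (z j)) (φ (z i) (z j)) with hA
  set B := ∑ i : Fin n, ∑ j ∈ univ.erase i, ∑ l ∈ (univ.erase i).erase j,
      g'' (z i) (φ (z i) (z j)) (φ (z i) (z l)) with hB
  rw [Finset.sum_congr rfl (fun i _ => key i), ← Finset.mul_sum, Finset.sum_add_distrib,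
    ← hA, ← hB, hU₁, hU₂]
  rw [hc]
  have e1 : 1/((n:ℝ)-1) * (1/((n:ℝ)*((n:ℝ)-1))) = 1/(n:ℝ) * (1/((n:ℝ)-1))^2 := by
    field_simp
  have e2 : ((n:ℝ)-2)/((n:ℝ)-1) * (1/((n:ℝ)*((n:ℝ)-1)*((n:ℝ)-2))) =
      1/(n:ℝ) * (1/((n:ℝ)-1))^2 := by
    field_simp
  linear_combination (-A) * e1 + (-B) * e2
end

section
/- (Small-bias property of the twicing kernel) Let K be a symmetric kernel of order m on ℝ (∫K = 1, ∫ u^j K(u) du = 0 for 1 ≤ j ≤ m−1, ∫ |u|^m |K(u)| du < ∞) and K̃ = 2K − K∗K the twicing kernel. Then K̃ is a kernel of order 2m: ∫ K̃ = 1 and ∫ u^j K̃(u) du = 0 for all 1 ≤ j ≤ 2m − 1. -/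
open MeasureTheory

/-- Small-bias property of the twicing kernel: if `K` is a kernel of order `m`
(unit mass, vanishing moments up to `m-1`, with `2m` absolute moments finite),
then the twicing kernel `K̃ = 2K − K∗K` is a kernel of order `2m`. -/
theorem twicing_kernel_order
    (m : ℕ) (hm : 1 ≤ m) (K : ℝ → ℝ)
    (hKint : Integrable K)
    (hKmom : Integrable (fun u => |u| ^ (2 * m) * |K u|))
    (hK0 : ∫ u, K u = 1)
    (hKvanish : ∀ j : ℕ, 1 ≤ j → j ≤ m - 1 → ∫ u, u ^ j * K u = 0)
    (KK Ktilde : ℝ → ℝ)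
    (hKK : ∀ u, KK u = ∫ v, K (u - v) * K v)
    (hKt : ∀ u, Ktilde u = 2 * K u - KK u) :
    (∫ u, Ktilde u = 1) ∧
    (∀ j : ℕ, 1 ≤ j → j ≤ 2 * m - 1 → ∫ u, u ^ j * Ktilde u = 0) := by
  -- moments of K
  set μ : ℕ → ℝ := fun k => ∫ u, u ^ k * K u with hμ
  have hμ0 : μ 0 = 1 := by simp only [hμ]; simpa using hK0
  -- integrability of moments of K up to order 2m
  have hmomK : ∀ j : ℕ, j ≤ 2 * m → Integrable (fun u : ℝ => u ^ j * K u) := by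
    intro j hj
    have hbound : Integrable (fun u : ℝ => |K u| + |u| ^ (2 * m) * |K u|) :=
      hKint.abs.add hKmom
    refine hbound.mono ?_ (Filter.Eventually.of_forall fun u => ?_)
    · exact ((continuous_pow j).aestronglyMeasurable).mul hKint.aestronglyMeasurable
    · have h1 : |u| ^ j ≤ 1 + |u| ^ (2 * m) := by
        rcases le_or_gt |u| 1 with h | h
        · have := pow_le_one₀ (abs_nonneg u) h (n := j)
          have h2 : (0:ℝ) ≤ |u| ^ (2 * m) := pow_nonneg (abs_nonneg u) _
          linarith
        · have := pow_le_pow_right₀ h.le hj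
          linarith
      have hnn : (0:ℝ) ≤ |K u| + |u| ^ (2 * m) * |K u| := by positivity
      rw [Real.norm_eq_abs, Real.norm_eq_abs, abs_of_nonneg hnn, abs_mul, abs_pow]
      nlinarith [abs_nonneg (K u), pow_nonneg (abs_nonneg u) j]
  -- the key convolution moment formula
  have key : ∀ j : ℕ, j ≤ 2 * m →
      (Integrable (fun u : ℝ => u ^ j * KK u) ∧
       ∫ u, u ^ j * KK u = ∑ k ∈ Finset.range (j + 1),
          μ k * μ (j - k) * (j.choose k : ℝ)) := by
    intro j hj
    set H : ℝ × ℝ → ℝ := fun p => ∑ k ∈ Finset.range (j + 1),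
      (p.1 ^ k * K p.1) * (p.2 ^ (j - k) * K p.2) * (j.choose k : ℝ) with hH
    have hHint : Integrable H ((volume : Measure ℝ).prod volume) := by
      refine integrable_finset_sum _ fun k hk => ?_
      have hk1 : k ≤ 2 * m := le_trans (Nat.lt_succ_iff.mp (Finset.mem_range.mp hk)) hj
      have hk2 : j - k ≤ 2 * m := le_trans (Nat.sub_le _ _) hj
      exact ((hmomK k hk1).mul_prod (hmomK (j - k) hk2)).mul_const _
    have hHeq : ∀ p : ℝ × ℝ, H p = (p.1 + p.2) ^ j * (K p.1 * K p.2) := by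
      intro p
      rw [hH, add_pow, Finset.sum_mul]
      exact Finset.sum_congr rfl fun k _ => by ring
    set T : ℝ × ℝ → ℝ × ℝ := fun p => (p.1 - p.2, p.2) with hT
    have hTmp : MeasurePreserving T ((volume : Measure ℝ).prod volume)
        ((volume : Measure ℝ).prod volume) := measurePreserving_sub_prod volume volume
    have hgH : (fun p : ℝ × ℝ => p.1 ^ j * (K (p.1 - p.2) * K p.2)) = H ∘ T := by
      funext p
      simp only [Function.comp_apply, hT, hHeq, sub_add_cancel]
    have hgint : Integrable (fun p : ℝ × ℝ => p.1 ^ j * (K (p.1 - p.2) * K p.2))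
        ((volume : Measure ℝ).prod volume) := by
      rw [hgH]
      exact (hTmp.integrable_comp hHint.aestronglyMeasurable).mpr hHint
    have hmomKK : ∀ u : ℝ, u ^ j * KK u = ∫ v, u ^ j * (K (u - v) * K v) := by
      intro u
      rw [hKK u, integral_const_mul]
    constructor
    · refine (hgint.integral_prod_left).congr ?_
      exact Filter.Eventually.of_forall fun u => (hmomKK u).symm
    · calc ∫ u, u ^ j * KK u
          = ∫ u, ∫ v, u ^ j * (K (u - v) * K v) := by
            exact integral_congr_ae (Filter.Eventually.of_forall fun u => hmomKK u)
        _ = ∫ p : ℝ × ℝ, p.1 ^ j * (K (p.1 - p.2) * K p.2)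
              ∂((volume : Measure ℝ).prod volume) := by
            exact (integral_integral hgint)
        _ = ∫ p : ℝ × ℝ, H (T p) ∂((volume : Measure ℝ).prod volume) := by
            rw [hgH]; rfl
        _ = ∫ p : ℝ × ℝ, H p ∂((volume : Measure ℝ).prod volume) := by
            rw [← integral_map hTmp.measurable.aemeasurable
              (by rw [hTmp.map_eq]; exact hHint.aestronglyMeasurable), hTmp.map_eq]
        _ = ∑ k ∈ Finset.range (j + 1), μ k * μ (j - k) * (j.choose k : ℝ) := by
            rw [hH, integral_finset_sum]
            · refine Finset.sum_congr rfl fun k hk => ?_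
              rw [integral_mul_const]
              have := integral_prod_mul (μ := (volume : Measure ℝ)) (ν := (volume : Measure ℝ))
                (fun w : ℝ => w ^ k * K w) (fun v : ℝ => v ^ (j - k) * K v)
              simp only [hμ]
              rw [this]
            · intro k hk
              have hk1 : k ≤ 2 * m := le_trans (Nat.lt_succ_iff.mp (Finset.mem_range.mp hk)) hj
              have hk2 : j - k ≤ 2 * m := le_trans (Nat.sub_le _ _) hj
              exact ((hmomK k hk1).mul_prod (hmomK (j - k) hk2)).mul_const _
  constructor
  · -- ∫ Ktilde = 1
    have h0 := key 0 (by omega)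
    have hKKint : Integrable KK := by
      have := h0.1; simpa using this
    have hKKval : ∫ u, KK u = 1 := by
      have h2 := h0.2
      simp [Finset.sum_range_one, hμ0] at h2
      simpa using h2
    calc ∫ u, Ktilde u = ∫ u, (2 * K u - KK u) := by
          exact integral_congr_ae (Filter.Eventually.of_forall fun u => hKt u)
      _ = 2 * (∫ u, K u) - ∫ u, KK u := by
          rw [integral_sub (hKint.const_mul 2) hKKint, integral_const_mul]
      _ = 1 := by rw [hK0, hKKval]; ring
  · -- vanishing moments
    intro j hj1 hj2
    have hj : j ≤ 2 * m := by omega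
    have hkey := key j hj
    -- the convolution moment equals 2 μ j
    have hsum : ∑ k ∈ Finset.range (j + 1), μ k * μ (j - k) * (j.choose k : ℝ) = 2 * μ j := by
      have hterm : ∀ k ∈ Finset.range (j + 1),
          μ k * μ (j - k) * (j.choose k : ℝ) =
          (if k = 0 then μ j else 0) + (if k = j then μ j else 0) := by
        intro k hk
        have hkj : k ≤ j := Nat.lt_succ_iff.mp (Finset.mem_range.mp hk)
        rcases eq_or_ne k 0 with rfl | hk0
        · have hj0 : (0:ℕ) ≠ j := by omega
          simp [hμ0, hj0]
        rcases eq_or_ne k j with rfl | hkj'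
        · simp [hμ0, hk0, Nat.sub_self]
        · -- middle terms vanish
          have hmid : μ k = 0 ∨ μ (j - k) = 0 := by
            rcases le_or_gt k (m - 1) with h | h
            · exact Or.inl (hKvanish k (by omega) h)
            · refine Or.inr (hKvanish (j - k) (by omega) (by omega))
          rcases hmid with h | h <;> simp [h, hk0, hkj']
      rw [Finset.sum_congr rfl hterm, Finset.sum_add_distrib,
        Finset.sum_ite_eq' (Finset.range (j + 1)) 0 (fun _ => μ j),
        Finset.sum_ite_eq' (Finset.range (j + 1)) j (fun _ => μ j)]
      simp only [Finset.mem_range, Nat.lt_succ_iff, Nat.zero_le, le_refl, if_true]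
      ring
    have hmomint : Integrable (fun u : ℝ => u ^ j * K u) := hmomK j hj
    calc ∫ u, u ^ j * Ktilde u
        = ∫ u, (2 * (u ^ j * K u) - u ^ j * KK u) := by
          refine integral_congr_ae (Filter.Eventually.of_forall fun u => ?_)
          simp only [hKt]; ring
      _ = 2 * (∫ u, u ^ j * K u) - ∫ u, u ^ j * KK u := by
          rw [integral_sub (hmomint.const_mul 2) hkey.1, integral_const_mul]
      _ = 0 := by rw [hkey.2, hsum]; simp only [hμ]; ring
end

section
/- (ATE identification under unconfoundedness) Let (Y⁰, Y¹, D, X) satisfy (Y⁰, Y¹) ⊥ D | X, with D ∈ {0,1}, observed outcome Y = Y¹D + Y⁰(1−D), and propensity score e(X) = E[D | X] satisfying 0 < e(X) < 1 a.s. Then E[ YD/e(X) − Y(1−D)/(1−e(X)) ] = E[Y¹ − Y⁰]. -/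
open MeasureTheory ProbabilityTheory Set

section Aux

variable {Ω : Type*} (mX : MeasurableSpace Ω) [mΩ : MeasurableSpace Ω]

/-- If a probability measure multiplies on the sets `{f ≤ q} ∩ B` for rational `q`, then the
integral of `f` over `B` factorizes. -/
lemma aux_integral_indicator_mul
    (ν : Measure Ω) [IsProbabilityMeasure ν]
    (f : Ω → ℝ) (hfm : Measurable f) (hfint : Integrable f ν)
    (B : Set Ω) (hB : MeasurableSet B)
    (h : ∀ q : ℚ, ν (f ⁻¹' Set.Iic (q:ℝ) ∩ B) = ν (f ⁻¹' Set.Iic (q:ℝ)) * ν B) :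
    ∫ ω, B.indicator f ω ∂ν = (ν B).toReal * ∫ ω, f ω ∂ν := by
  have hall : ∀ ⦃t : Set ℝ⦄, MeasurableSet t → ν (f ⁻¹' t ∩ B) = ν (f ⁻¹' t) * ν B := by
    refine MeasurableSpace.induction_on_inter Real.borel_eq_generateFrom_Iic_rat
      Real.isPiSystem_Iic_rat ?_ ?_ ?_ ?_
    · simp
    · rintro t ht
      simp only [Set.mem_iUnion, Set.mem_singleton_iff] at ht
      obtain ⟨q, rfl⟩ := ht
      exact h q
    · intro t ht hC
      have h1 : ν (f ⁻¹' t ∩ B) + ν (f ⁻¹' tᶜ ∩ B) = ν B := by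
        rw [Set.preimage_compl]
        rw [← measure_inter_add_diff B (hfm ht)]
        congr 1
        · rw [Set.inter_comm]
        · rw [Set.diff_eq, Set.inter_comm]
      have h2 : ν (f ⁻¹' t) + ν (f ⁻¹' tᶜ) = 1 := by
        rw [Set.preimage_compl, measure_add_measure_compl (hfm ht), measure_univ]
      have hfin : ν (f ⁻¹' t) ≠ ⊤ := measure_ne_top _ _
      have hBfin : ν B ≠ ⊤ := measure_ne_top _ _
      have h3 : ν (f ⁻¹' tᶜ) = 1 - ν (f ⁻¹' t) := by
        rw [← h2]; rw [ENNReal.add_sub_cancel_left hfin]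
      rw [h3, ENNReal.sub_mul (fun _ _ => hBfin), one_mul, ← hC, ← h1,
        ENNReal.add_sub_cancel_left (measure_ne_top _ _)]
    · intro g hdis hmeas hC
      have h1 : f ⁻¹' (⋃ i, g i) ∩ B = ⋃ i, (f ⁻¹' (g i) ∩ B) := by
        rw [Set.preimage_iUnion, Set.iUnion_inter]
      have hd1 : Pairwise (Function.onFun Disjoint fun i => f ⁻¹' (g i) ∩ B) := fun i j hij =>
        ((hdis hij).preimage f).mono Set.inter_subset_left Set.inter_subset_left
      have hd2 : Pairwise (Function.onFun Disjoint fun i => f ⁻¹' (g i)) := fun i j hij =>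
        (hdis hij).preimage f
      rw [h1, Set.preimage_iUnion,
        measure_iUnion hd1 (fun i => (hfm (hmeas i)).inter hB),
        measure_iUnion hd2 (fun i => hfm (hmeas i)), ← ENNReal.tsum_mul_right]
      exact tsum_congr fun i => hC i
  have hmap : (ν.restrict B).map f = ν B • ν.map f := by
    refine Measure.ext fun t ht => ?_
    rw [Measure.map_apply hfm ht, Measure.restrict_apply (hfm ht),
      Measure.smul_apply, Measure.map_apply hfm ht, hall ht, smul_eq_mul, mul_comm]
  calc ∫ ω, B.indicator f ω ∂ν = ∫ ω in B, f ω ∂ν := integral_indicator hB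
    _ = ∫ y, y ∂((ν.restrict B).map f) :=
        (integral_map hfm.aemeasurable aestronglyMeasurable_id).symm
    _ = ∫ y, y ∂(ν B • ν.map f) := by rw [hmap]
    _ = (ν B).toReal * ∫ y, y ∂(ν.map f) := by rw [integral_smul_measure]; rfl
    _ = (ν B).toReal * ∫ ω, f ω ∂ν := by
        rw [show (∫ y, y ∂(ν.map f)) = ∫ ω, f ω ∂ν from
          integral_map hfm.aemeasurable aestronglyMeasurable_id]

variable [StandardBorelSpace Ω] (P : Measure Ω) [IsProbabilityMeasure P]

/-- Product formula for the conditional expectation of `f` multiplied by the indicator of `B`,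
assuming the conditional kernel multiplies on the sets `{f ≤ q} ∩ B`. Measurable version. -/
lemma aux_condExp_indicator_mul (hmX : mX ≤ mΩ)
    (f : Ω → ℝ) (hfm : Measurable f) (hf : Integrable f P)
    (B : Set Ω) (hB : MeasurableSet B)
    (h : ∀ q : ℚ, ∀ᵐ ω ∂P,
      condExpKernel P mX ω (f ⁻¹' Set.Iic (q:ℝ) ∩ B)
        = condExpKernel P mX ω (f ⁻¹' Set.Iic (q:ℝ)) * condExpKernel P mX ω B) :
    P[B.indicator f | mX]
      =ᵐ[P] fun ω => (P[f | mX]) ω * (P[B.indicator (fun _ => (1:ℝ)) | mX]) ω := by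
  have h1 : ∀ᵐ ω ∂P, ∀ q : ℚ,
      condExpKernel P mX ω (f ⁻¹' Set.Iic (q:ℝ) ∩ B)
        = condExpKernel P mX ω (f ⁻¹' Set.Iic (q:ℝ)) * condExpKernel P mX ω B :=
    (ae_all_iff).2 h
  have h2 : ∀ᵐ ω ∂P, Integrable f (condExpKernel P mX ω) := hf.condExpKernel_ae
  have h3 : P[f|mX] =ᵐ[P] fun ω => ∫ y, f y ∂(condExpKernel P mX ω) :=
    condExp_ae_eq_integral_condExpKernel hmX hf
  have h4 : P[B.indicator f|mX] =ᵐ[P] fun ω => ∫ y, B.indicator f y ∂(condExpKernel P mX ω) :=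
    condExp_ae_eq_integral_condExpKernel hmX (hf.indicator hB)
  have h5 : (fun ω => (condExpKernel P mX ω B).toReal)
      =ᵐ[P] P[B.indicator (fun _ => (1:ℝ)) | mX] := condExpKernel_ae_eq_condExp hmX hB
  filter_upwards [h1, h2, h3, h4, h5] with ω h1ω h2ω h3ω h4ω h5ω
  rw [h4ω, aux_integral_indicator_mul _ f hfm h2ω B hB h1ω, ← h3ω, ← h5ω, mul_comm]

/-- Product formula for the conditional expectation, for an a.e. modification of a
measurable function. -/
lemma aux_condExp_indicator_mul' (hmX : mX ≤ mΩ)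
    (f f' : Ω → ℝ) (hff' : f =ᵐ[P] f') (hf'm : Measurable f') (hf : Integrable f P)
    (B : Set Ω) (hB : MeasurableSet B)
    (h : ∀ q : ℚ, ∀ᵐ ω ∂P,
      condExpKernel P mX ω (f ⁻¹' Set.Iic (q:ℝ) ∩ B)
        = condExpKernel P mX ω (f ⁻¹' Set.Iic (q:ℝ)) * condExpKernel P mX ω B) :
    P[fun ω => f ω * B.indicator (fun _ => (1:ℝ)) ω | mX]
      =ᵐ[P] fun ω => (P[f | mX]) ω * (P[B.indicator (fun _ => (1:ℝ)) | mX]) ω := by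
  set s : Set Ω := {ω | f ω ≠ f' ω} with hs_def
  have hs_null : P s = 0 := ae_iff.1 hff'
  set N : Set Ω := toMeasurable P s with hN_def
  have hNm : MeasurableSet N := measurableSet_toMeasurable P s
  have hNnull : P N = 0 := by rw [hN_def, measure_toMeasurable]; exact hs_null
  -- the kernel gives measure 0 to N almost everywhere
  have hκN : ∀ᵐ ω ∂P, condExpKernel P mX ω N = 0 := by
    have hzero : P[N.indicator (fun _ => (1:ℝ)) | mX] =ᵐ[P] fun _ => (0:ℝ) := by
      have h0 : N.indicator (fun _ => (1:ℝ)) =ᵐ[P] (fun _ => (0:ℝ)) := by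
        filter_upwards [measure_eq_zero_iff_ae_notMem.1 hNnull] with ω hω
        simp [Set.indicator_of_notMem hω]
      refine (condExp_congr_ae h0).trans ?_
      rw [show (fun (_ : Ω) => (0:ℝ)) = (0 : Ω → ℝ) from rfl, condExp_zero]
    have hker := condExpKernel_ae_eq_condExp (μ := P) hmX hNm
    filter_upwards [hker, hzero] with ω h1 h2
    have h3 : (condExpKernel P mX ω N).toReal = 0 := h1.trans h2
    rcases (ENNReal.toReal_eq_zero_iff _).1 h3 with h4 | h4
    · exact h4
    · exact absurd h4 (measure_ne_top _ _)
  -- transfer hypothesis `h` to the measurable modification `f'`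
  have h' : ∀ q : ℚ, ∀ᵐ ω ∂P,
      condExpKernel P mX ω (f' ⁻¹' Set.Iic (q:ℝ) ∩ B)
        = condExpKernel P mX ω (f' ⁻¹' Set.Iic (q:ℝ)) * condExpKernel P mX ω B := by
    intro q
    filter_upwards [h q, hκN] with ω hω hN0
    have key : ∀ t u : Set Ω, t \ u ⊆ N → u \ t ⊆ N →
        condExpKernel P mX ω t = condExpKernel P mX ω u := fun t u ht hu =>
      measure_congr (ae_eq_set.2 ⟨measure_mono_null ht hN0, measure_mono_null hu hN0⟩)
    have hsub1 : f' ⁻¹' Set.Iic (q:ℝ) \ f ⁻¹' Set.Iic (q:ℝ) ⊆ N := by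
      intro x hx
      refine subset_toMeasurable P s ?_
      intro hEq
      exact hx.2 (by rw [Set.mem_preimage, hEq]; exact hx.1)
    have hsub2 : f ⁻¹' Set.Iic (q:ℝ) \ f' ⁻¹' Set.Iic (q:ℝ) ⊆ N := by
      intro x hx
      refine subset_toMeasurable P s ?_
      intro hEq
      exact hx.2 (by rw [Set.mem_preimage, ← hEq]; exact hx.1)
    have e1 : condExpKernel P mX ω (f' ⁻¹' Set.Iic (q:ℝ) ∩ B)
        = condExpKernel P mX ω (f ⁻¹' Set.Iic (q:ℝ) ∩ B) := by
      refine key _ _ ?_ ?_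
      · intro x hx; exact hsub1 ⟨hx.1.1, fun hc => hx.2 ⟨hc, hx.1.2⟩⟩
      · intro x hx; exact hsub2 ⟨hx.1.1, fun hc => hx.2 ⟨hc, hx.1.2⟩⟩
    have e2 : condExpKernel P mX ω (f' ⁻¹' Set.Iic (q:ℝ))
        = condExpKernel P mX ω (f ⁻¹' Set.Iic (q:ℝ)) := key _ _ hsub1 hsub2
    rw [e1, e2, hω]
  have hf' : Integrable f' P := hf.congr hff'
  have hmain := aux_condExp_indicator_mul mX P hmX f' hf'm hf' B hB h'
  have c1 : P[fun ω => f ω * B.indicator (fun _ => (1:ℝ)) ω | mX]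
      =ᵐ[P] P[B.indicator f' | mX] := by
    refine condExp_congr_ae ?_
    filter_upwards [hff'] with ω hω
    by_cases hmem : ω ∈ B <;>
      simp [Set.indicator_of_mem, Set.indicator_of_notMem, hmem, hω]
  have c2 : P[f'|mX] =ᵐ[P] P[f|mX] := condExp_congr_ae hff'.symm
  refine c1.trans (hmain.trans ?_)
  filter_upwards [c2] with ω hω
  rw [hω]

/-- The IPW integral computation: if the conditional expectation of `f * Z` factorizes and
`e` is a.e. the conditional expectation of `Z`, positive a.e., then
`∫ f Z / e = ∫ f`. -/
lemma aux_integral_weight (hmX : mX ≤ mΩ)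
    (f : Ω → ℝ) (hf : Integrable f P)
    (Z : Ω → ℝ) (hZm : Measurable Z) (hZbd : ∀ ω, ‖Z ω‖ ≤ 1)
    (e : Ω → ℝ) (he : e =ᵐ[P] P[Z | mX]) (hepos : ∀ᵐ ω ∂P, 0 < e ω)
    (hK : P[fun ω => f ω * Z ω | mX] =ᵐ[P] fun ω => (P[f | mX]) ω * (P[Z | mX]) ω)
    (hint : Integrable (fun ω => f ω * Z ω / e ω) P) :
    ∫ ω, f ω * Z ω / e ω ∂P = ∫ ω, f ω ∂P := by
  set g : Ω → ℝ := P[Z | mX] with hg_def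
  have hgm : StronglyMeasurable[mX] g := stronglyMeasurable_condExp
  have hinvm : StronglyMeasurable[mX] (fun ω => (g ω)⁻¹) :=
    (hgm.measurable.inv).stronglyMeasurable
  have hfZ : Integrable (fun ω => f ω * Z ω) P := by
    have := hf.bdd_mul (c := 1) hZm.aestronglyMeasurable (ae_of_all _ hZbd)
    simpa [mul_comm] using this
  have hA : (fun ω => f ω * Z ω / e ω) =ᵐ[P] fun ω => (g ω)⁻¹ * (f ω * Z ω) := by
    filter_upwards [he] with ω hω
    rw [div_eq_inv_mul, hω]
  have hB : Integrable (fun ω => (g ω)⁻¹ * (f ω * Z ω)) P := hint.congr hA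
  have hC : P[fun ω => (g ω)⁻¹ * (f ω * Z ω) | mX]
      =ᵐ[P] fun ω => (g ω)⁻¹ * (P[fun ω => f ω * Z ω | mX]) ω := by
    have := condExp_mul_of_stronglyMeasurable_left hinvm
      (show Integrable ((fun ω => (g ω)⁻¹) * fun ω => f ω * Z ω) P from hB) hfZ
    exact this
  have hgpos : ∀ᵐ ω ∂P, 0 < g ω := by
    filter_upwards [he, hepos] with ω h1 h2
    rw [← h1]; exact h2
  have hD : P[fun ω => (g ω)⁻¹ * (f ω * Z ω) | mX] =ᵐ[P] P[f | mX] := by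
    filter_upwards [hC, hK, hgpos] with ω h1 h2 h3
    rw [h1, h2, mul_comm ((P[f|mX]) ω), ← mul_assoc,
      inv_mul_cancel₀ (ne_of_gt h3), one_mul]
  calc ∫ ω, f ω * Z ω / e ω ∂P
      = ∫ ω, (g ω)⁻¹ * (f ω * Z ω) ∂P := integral_congr_ae hA
    _ = ∫ ω, (P[fun ω => (g ω)⁻¹ * (f ω * Z ω) | mX]) ω ∂P := (integral_condExp hmX).symm
    _ = ∫ ω, (P[f | mX]) ω ∂P := integral_congr_ae hD
    _ = ∫ ω, f ω ∂P := integral_condExp hmX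

end Aux

/-- ATE identification under unconfoundedness: if `(Y⁰, Y¹) ⊥ D | X`, `D ∈ {0,1}`,
`Y = Y¹D + Y⁰(1−D)` and the propensity score `e(X) = E[D|X]` satisfies
`0 < e(X) < 1` a.s., then the inverse-propensity-weighted moment identifies the ATE:
`E[YD/e(X) − Y(1−D)/(1−e(X))] = E[Y¹ − Y⁰]`. -/
theorem ate_identification
    {Ω : Type*} (mX : MeasurableSpace Ω) [mΩ : MeasurableSpace Ω] [StandardBorelSpace Ω]
    (P : Measure Ω) [IsProbabilityMeasure P]
    {XT : Type*} [MeasurableSpace XT]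
    (X : Ω → XT) (hXmeas : Measurable X)
    (hmXdef : mX = MeasurableSpace.comap X inferInstance)
    (hmX : mX ≤ mΩ)
    (Y0 Y1 D : Ω → ℝ)
    (hY0 : Integrable Y0 P) (hY1 : Integrable Y1 P)
    (hDmeas : Measurable D) (hDbin : ∀ ω, D ω = 0 ∨ D ω = 1)
    (hCI : CondIndepFun mX hmX (fun ω => (Y0 ω, Y1 ω)) D P)
    (e : Ω → ℝ) (he : e =ᵐ[P] P[D | mX])
    (hebdd : ∀ᵐ ω ∂P, 0 < e ω ∧ e ω < 1)
    (Y : Ω → ℝ) (hY : ∀ ω, Y ω = Y1 ω * D ω + Y0 ω * (1 - D ω))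
    (hint1 : Integrable (fun ω => Y ω * D ω / e ω) P)
    (hint0 : Integrable (fun ω => Y ω * (1 - D ω) / (1 - e ω)) P) :
    ∫ ω, (Y ω * D ω / e ω - Y ω * (1 - D ω) / (1 - e ω)) ∂P =
      ∫ ω, (Y1 ω - Y0 ω) ∂P := by
  classical
  -- the treatment set
  set A : Set Ω := D ⁻¹' {1} with hA_def
  have hDmeasO : Measurable[mΩ] D := hDmeas
  have hAm : MeasurableSet[mΩ] A := hDmeasO (measurableSet_singleton 1)
  have hDind : D = A.indicator (fun _ => (1:ℝ)) := by
    funext ω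
    rcases hDbin ω with h | h <;>
      simp [Set.indicator_apply, hA_def, Set.mem_preimage, h]
  have h1mD : (fun ω => 1 - D ω) = Aᶜ.indicator (fun _ => (1:ℝ)) := by
    funext ω
    rcases hDbin ω with h | h <;>
      simp [Set.indicator_apply, hA_def, Set.mem_preimage, h]
  -- unfold conditional independence
  have hCI' : ∀ (t1 t2 : Set Ω),
      MeasurableSet[MeasurableSpace.comap (fun ω => (Y0 ω, Y1 ω)) inferInstance] t1 →
      MeasurableSet[MeasurableSpace.comap D inferInstance] t2 →
      ∀ᵐ ω ∂(P.trim hmX), condExpKernel (mΩ := mΩ) P mX ω (t1 ∩ t2)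
        = condExpKernel (mΩ := mΩ) P mX ω t1 * condExpKernel (mΩ := mΩ) P mX ω t2 :=
    fun t1 t2 h1 h2 => hCI t1 t2 h1 h2
  -- the product property for the relevant sets
  have hq1 : ∀ q : ℚ, ∀ᵐ ω ∂P,
      condExpKernel (mΩ := mΩ) P mX ω (Y1 ⁻¹' Set.Iic (q:ℝ) ∩ A)
        = condExpKernel (mΩ := mΩ) P mX ω (Y1 ⁻¹' Set.Iic (q:ℝ)) * condExpKernel (mΩ := mΩ) P mX ω A := by
    intro q
    refine ae_of_ae_trim hmX (hCI' _ _ ?_ ?_)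
    · exact ⟨Set.univ ×ˢ Set.Iic (q:ℝ), MeasurableSet.univ.prod measurableSet_Iic,
        by ext ω; simp⟩
    · exact ⟨{1}, measurableSet_singleton 1, rfl⟩
  have hq0 : ∀ q : ℚ, ∀ᵐ ω ∂P,
      condExpKernel (mΩ := mΩ) P mX ω (Y0 ⁻¹' Set.Iic (q:ℝ) ∩ Aᶜ)
        = condExpKernel (mΩ := mΩ) P mX ω (Y0 ⁻¹' Set.Iic (q:ℝ)) * condExpKernel (mΩ := mΩ) P mX ω Aᶜ := by
    intro q
    refine ae_of_ae_trim hmX (hCI' _ _ ?_ ?_)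
    · exact ⟨Set.Iic (q:ℝ) ×ˢ Set.univ, measurableSet_Iic.prod MeasurableSet.univ,
        by ext ω; simp⟩
    · exact ⟨({1} : Set ℝ)ᶜ, (measurableSet_singleton 1).compl, by rw [Set.preimage_compl]⟩
  -- conditional expectation product formulas
  have hK1 : P[fun ω => Y1 ω * D ω | mX]
      =ᵐ[P] fun ω => (P[Y1 | mX]) ω * (P[D | mX]) ω := by
    have := aux_condExp_indicator_mul' (mΩ := mΩ) mX P hmX Y1 (hY1.1.mk Y1) hY1.1.ae_eq_mk
      hY1.1.measurable_mk hY1 A hAm hq1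
    rw [show A.indicator (fun _ => (1:ℝ)) = D from hDind.symm] at this
    exact this
  have hK0 : P[fun ω => Y0 ω * (1 - D ω) | mX]
      =ᵐ[P] fun ω => (P[Y0 | mX]) ω * (P[fun ω => 1 - D ω | mX]) ω := by
    have := aux_condExp_indicator_mul' (mΩ := mΩ) mX P hmX Y0 (hY0.1.mk Y0) hY0.1.ae_eq_mk
      hY0.1.measurable_mk hY0 Aᶜ hAm.compl hq0
    rw [show Aᶜ.indicator (fun _ => (1:ℝ)) = (fun ω => 1 - D ω) from h1mD.symm] at this
    exact this
  -- integrability of D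
  have hDint : Integrable D P := by
    refine Integrable.mono' (integrable_const (1:ℝ)) hDmeasO.aestronglyMeasurable ?_
    filter_upwards with ω
    rcases hDbin ω with h | h <;> simp [h]
  -- 1 - e is a.e. the conditional expectation of 1 - D
  have he0 : (fun ω => 1 - e ω) =ᵐ[P] P[fun ω => 1 - D ω | mX] := by
    have hsub : P[fun ω => 1 - D ω | mX]
        =ᵐ[P] fun ω => (P[fun _ => (1:ℝ) | mX]) ω - (P[D | mX]) ω := by
      have := condExp_sub (m := mX) (μ := P) (integrable_const (1:ℝ)) hDint
      exact this
    have hconst : P[fun _ => (1:ℝ) | mX] = fun _ => (1:ℝ) := condExp_const hmX 1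
    filter_upwards [hsub, he] with ω h1 h2
    rw [h1, hconst]
    simp [h2]
  -- pointwise identities for the observed outcome
  have hYD : ∀ ω, Y ω * D ω = Y1 ω * D ω := by
    intro ω
    rcases hDbin ω with h | h <;> simp [hY, h]
  have hYD0 : ∀ ω, Y ω * (1 - D ω) = Y0 ω * (1 - D ω) := by
    intro ω
    rcases hDbin ω with h | h <;> simp [hY, h]
  -- the two IPW integrals
  have hside1 : ∫ ω, Y ω * D ω / e ω ∂P = ∫ ω, Y1 ω ∂P := by
    have hZbd : ∀ ω, ‖D ω‖ ≤ 1 := by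
      intro ω; rcases hDbin ω with h | h <;> simp [h]
    have hint1' : Integrable (fun ω => Y1 ω * D ω / e ω) P := by
      have : (fun ω => Y ω * D ω / e ω) = fun ω => Y1 ω * D ω / e ω := by
        funext ω; rw [hYD]
      rwa [this] at hint1
    have := aux_integral_weight (mΩ := mΩ) mX P hmX Y1 hY1 D hDmeasO hZbd e he
      (hebdd.mono fun ω h => h.1) hK1 hint1'
    calc ∫ ω, Y ω * D ω / e ω ∂P = ∫ ω, Y1 ω * D ω / e ω ∂P := by
          congr 1; funext ω; rw [hYD]
      _ = ∫ ω, Y1 ω ∂P := this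
  have hside0 : ∫ ω, Y ω * (1 - D ω) / (1 - e ω) ∂P = ∫ ω, Y0 ω ∂P := by
    have hZm : Measurable[mΩ] (fun ω => 1 - D ω) := (measurable_const.sub hDmeasO)
    have hZbd : ∀ ω, ‖1 - D ω‖ ≤ 1 := by
      intro ω; rcases hDbin ω with h | h <;> simp [h]
    have hint0' : Integrable (fun ω => Y0 ω * (1 - D ω) / (1 - e ω)) P := by
      have : (fun ω => Y ω * (1 - D ω) / (1 - e ω))
          = fun ω => Y0 ω * (1 - D ω) / (1 - e ω) := by
        funext ω; rw [hYD0]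
      rwa [this] at hint0
    have hepos0 : ∀ᵐ ω ∂P, 0 < 1 - e ω := hebdd.mono fun ω h => by linarith [h.2]
    have := aux_integral_weight (mΩ := mΩ) mX P hmX Y0 hY0 (fun ω => 1 - D ω) hZm hZbd
      (fun ω => 1 - e ω) he0 hepos0 hK0 hint0'
    calc ∫ ω, Y ω * (1 - D ω) / (1 - e ω) ∂P
        = ∫ ω, Y0 ω * (1 - D ω) / (1 - e ω) ∂P := by
          congr 1; funext ω; rw [hYD0]
      _ = ∫ ω, Y0 ω ∂P := this
  rw [integral_sub hint1 hint0, hside1, hside0, integral_sub hY1 hY0]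
end
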